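/- For every set F ⊆ ℝ^d, the limit lim_{θ→0⁺} dim_A^θ F exists and equals the generalized upper box dimension \overline{dim}_GB F = limsup_{θ→0⁺} dim_A^θ F. -/
import Mathlib


open Filter Metric Set Topology Bornology ENNReal

noncomputable section

variable {X : Type*} [PseudoMetricSpace X]

/-- `coveringNumber r E` is the smallest number of closed balls of radius `r`
needed to cover `E` (with value `⊤` if no finite cover exists). -/
def coveringNumber (r : ℝ) (E : Set X) : ℕ∞ :=
  sInf {n : ℕ∞ | ∃ t : Finset X, (E ⊆ ⋃ x ∈ t, closedBall x r) ∧ (t.card : ℕ∞) = n}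

/-- The Assouad spectrum `dim_A^θ F`. -/
def assouadSpectrum (θ : ℝ) (F : Set X) : ℝ :=
  sInf {s : ℝ | 0 ≤ s ∧ ∃ C > (0 : ℝ), ∀ R : ℝ, 0 < R → R < 1 → ∀ x ∈ F,
    (coveringNumber (R ^ (1 / θ)) (closedBall x R ∩ F) : ℝ≥0∞)
      ≤ ENNReal.ofReal (C * (R / R ^ (1 / θ)) ^ s)}

/-- The upper spectrum `\overline{dim}_A^θ F`. -/
def upperSpectrum (θ : ℝ) (F : Set X) : ℝ :=
  sInf {s : ℝ | 0 ≤ s ∧ ∃ C > (0 : ℝ), ∀ r R : ℝ, 0 < r → r ≤ R ^ (1 / θ) →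
    R ^ (1 / θ) < R → R < 1 → 0 < R → ∀ x ∈ F,
    (coveringNumber r (closedBall x R ∩ F) : ℝ≥0∞) ≤ ENNReal.ofReal (C * (R / r) ^ s)}

/-- The generalized upper box dimension `\overline{dim}_{GB} F := limsup_{θ → 0⁺} dim_A^θ F`. -/
def genUpperBoxDim (F : Set X) : ℝ :=
  limsup (fun θ : ℝ => assouadSpectrum θ F) (𝓝[>] (0 : ℝ))

/-- The quasi-Assouad dimension `dim_{qA} F := lim_{θ → 1⁻} \overline{dim}_A^θ F`
(the limit exists by monotonicity, hence equals the limsup). -/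
def quasiAssouadDim (F : Set X) : ℝ :=
  limsup (fun θ : ℝ => upperSpectrum θ F) (𝓝[<] (1 : ℝ))

/-- The upper box dimension `\overline{dim}_B F := limsup_{δ → 0⁺} log N_δ(F) / (- log δ)`. -/
def upperBoxDim (F : Set X) : ℝ :=
  limsup (fun δ : ℝ => Real.log ((coveringNumber δ F).toNat : ℝ) / (- Real.log δ))
    (𝓝[>] (0 : ℝ))

/-- The Assouad dimension `dim_A F`. -/
def assouadDim (F : Set X) : ℝ :=
  sInf {s : ℝ | 0 ≤ s ∧ ∃ C > (0 : ℝ), ∃ ρ > (0 : ℝ), ∀ r R : ℝ, 0 < r → r < R → R < ρ →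
    ∀ x ∈ F, (coveringNumber r (closedBall x R ∩ F) : ℝ≥0∞) ≤ ENNReal.ofReal (C * (R / r) ^ s)}

/-- The packing pre-measure at scale `δ`: the supremum of `∑ |B_i|^s` over at most countable
collections of disjoint closed balls of radii at most `δ` (and positive) with centres in `F`,
where `|B_i| = 2 r_i` is the diameter. -/
def packingPre (s δ : ℝ) (F : Set X) : ℝ≥0∞ :=
  ⨆ (D : Set (X × ℝ)) (_ : D.Countable)
    (_ : ∀ p ∈ D, p.1 ∈ F ∧ 0 < p.2 ∧ p.2 ≤ δ)
    (_ : D.Pairwise fun p q => Disjoint (closedBall p.1 p.2) (closedBall q.1 q.2)),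
    ∑' p : D, ENNReal.ofReal ((2 * (p : X × ℝ).2) ^ s)

/-- `𝒫₀^s(F) := lim_{δ → 0} 𝒫_δ^s(F)`; the limit exists by monotonicity and equals the inf. -/
def packingPre₀ (s : ℝ) (F : Set X) : ℝ≥0∞ :=
  ⨅ (δ : ℝ) (_ : 0 < δ), packingPre s δ F

/-- The packing (outer) measure `𝒫^s(F)`. -/
def packingMeasure (s : ℝ) (F : Set X) : ℝ≥0∞ :=
  ⨅ (G : ℕ → Set X) (_ : F ⊆ ⋃ i, G i), ∑' i, packingPre₀ s (G i)

/-- The packing dimension `dim_P F = inf {s ≥ 0 : 𝒫^s(F) = 0}`. -/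
def packingDim (F : Set X) : ℝ :=
  sInf {s : ℝ | 0 ≤ s ∧ packingMeasure s F = 0}


private lemma coveringNumber_le_card' {r : ℝ} {E : Set X} {t : Finset X}
    (h : E ⊆ ⋃ x ∈ t, closedBall x r) : coveringNumber r E ≤ t.card :=
  sInf_le ⟨t, h, rfl⟩

private lemma coveringNumber_mono_set {r : ℝ} {E E' : Set X} (h : E ⊆ E') :
    coveringNumber r E ≤ coveringNumber r E' :=
  sInf_le_sInf (by rintro n ⟨t, ht, rfl⟩; exact ⟨t, h.trans ht, rfl⟩)

private lemma euclidean_cover_pow (d : ℕ) : ∃ M : ℕ, 1 ≤ M ∧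
    ∀ (k : ℕ) (x : EuclideanSpace ℝ (Fin d)) (R : ℝ), 0 < R →
      ∃ t : Finset (EuclideanSpace ℝ (Fin d)),
        (closedBall x R ⊆ ⋃ y ∈ t, closedBall y (R / 2 ^ k)) ∧ t.card ≤ M ^ k := by
  classical
  obtain ⟨t0, ht0⟩ := (isCompact_closedBall (0 : EuclideanSpace ℝ (Fin d)) 2).elim_finite_subcover
    (fun y : EuclideanSpace ℝ (Fin d) => ball y 2⁻¹) (fun _ => isOpen_ball)
    (fun z _ => mem_iUnion.2 ⟨z, mem_ball_self (by norm_num)⟩)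
  set M := t0.card + 1 with hM
  have base : ∀ (x : EuclideanSpace ℝ (Fin d)) (r : ℝ), 0 < r →
      ∃ t : Finset (EuclideanSpace ℝ (Fin d)),
        (closedBall x (2 * r) ⊆ ⋃ y ∈ t, closedBall y r) ∧ t.card ≤ M := by
    intro x r hr
    refine ⟨t0.image (fun y => x + r • y), ?_, Finset.card_image_le.trans (Nat.le_succ _)⟩
    intro z hz
    have h1 : r⁻¹ • (z - x) ∈ closedBall (0 : EuclideanSpace ℝ (Fin d)) 2 := by
      have h2 : ‖z - x‖ ≤ 2 * r := by rwa [mem_closedBall, dist_eq_norm] at hz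
      rw [mem_closedBall, dist_eq_norm, sub_zero, norm_smul, norm_inv, Real.norm_eq_abs,
        abs_of_pos hr]
      calc r⁻¹ * ‖z - x‖ ≤ r⁻¹ * (2 * r) :=
            mul_le_mul_of_nonneg_left h2 (inv_nonneg.2 hr.le)
        _ = 2 := by field_simp
    rcases mem_iUnion₂.1 (ht0 h1) with ⟨y, hyt, hy⟩
    refine mem_iUnion₂.2 ⟨x + r • y, Finset.mem_image_of_mem _ hyt, ?_⟩
    rw [mem_closedBall, dist_eq_norm]
    have hz' : z - (x + r • y) = r • (r⁻¹ • (z - x) - y) := by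
      rw [smul_sub, smul_smul, mul_inv_cancel₀ hr.ne', one_smul, sub_add_eq_sub_sub]
    rw [hz', norm_smul, Real.norm_eq_abs, abs_of_pos hr]
    have hb : ‖r⁻¹ • (z - x) - y‖ < 2⁻¹ := by rwa [mem_ball, dist_eq_norm] at hy
    nlinarith [norm_nonneg (r⁻¹ • (z - x) - y)]
  refine ⟨M, Nat.le_add_left 1 _, ?_⟩
  intro k
  induction k with
  | zero =>
    intro x R hR
    refine ⟨{x}, ?_, by simp⟩
    intro z hz
    refine mem_iUnion₂.2 ⟨x, Finset.mem_singleton_self x, ?_⟩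
    simpa using hz
  | succ k ih =>
    intro x R hR
    obtain ⟨t1, ht1, hcard1⟩ := base x (R / 2) (by positivity)
    choose s hs hscard using fun (y : EuclideanSpace ℝ (Fin d)) => ih y (R / 2) (by positivity)
    refine ⟨t1.biUnion s, ?_, ?_⟩
    · intro z hz
      have hz2 : z ∈ closedBall x (2 * (R / 2)) := by
        rwa [show 2 * (R / 2) = R by ring]
      rcases mem_iUnion₂.1 (ht1 hz2) with ⟨y, hyt, hy⟩
      rcases mem_iUnion₂.1 (hs y hy) with ⟨w, hws, hw⟩
      refine mem_iUnion₂.2 ⟨w, Finset.mem_biUnion.2 ⟨y, hyt, hws⟩, ?_⟩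
      have he : R / 2 / 2 ^ k = R / 2 ^ (k + 1) := by ring
      rwa [he] at hw
    · calc (t1.biUnion s).card ≤ ∑ y ∈ t1, (s y).card := Finset.card_biUnion_le
        _ ≤ ∑ _y ∈ t1, M ^ k := Finset.sum_le_sum fun y _ => hscard y
        _ = t1.card * M ^ k := by rw [Finset.sum_const, smul_eq_mul]
        _ ≤ M * M ^ k := Nat.mul_le_mul_right _ hcard1
        _ = M ^ (k + 1) := by ring

private lemma euclidean_covN (d : ℕ) : ∃ C : ℝ, 0 < C ∧ ∃ s₀ : ℝ, 0 ≤ s₀ ∧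
    ∀ (x : EuclideanSpace ℝ (Fin d)) (r R : ℝ), 0 < r → r ≤ R →
      (coveringNumber r (closedBall x R) : ℝ≥0∞) ≤ ENNReal.ofReal (C * (R / r) ^ s₀) := by
  obtain ⟨M, hM1, hcov⟩ := euclidean_cover_pow d
  have hM1' : (1 : ℝ) ≤ M := by exact_mod_cast hM1
  have hMpos : (0 : ℝ) < M := lt_of_lt_of_le one_pos hM1'
  refine ⟨M, hMpos, Real.logb 2 M, Real.logb_nonneg one_lt_two hM1', ?_⟩
  intro x r R hr hrR
  have hR : 0 < R := hr.trans_le hrR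
  set k := ⌈Real.logb 2 (R / r)⌉₊ with hk
  have hq1 : (1 : ℝ) ≤ R / r := (one_le_div hr).2 hrR
  have hqpos : (0 : ℝ) < R / r := lt_of_lt_of_le one_pos hq1
  have hlogb0 : 0 ≤ Real.logb 2 (R / r) := Real.logb_nonneg one_lt_two hq1
  have h2k : R / r ≤ 2 ^ k := by
    calc R / r = (2 : ℝ) ^ Real.logb 2 (R / r) :=
          (Real.rpow_logb two_pos (by norm_num) hqpos).symm
      _ ≤ (2 : ℝ) ^ (k : ℝ) := Real.rpow_le_rpow_of_exponent_le one_le_two (Nat.le_ceil _)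
      _ = 2 ^ k := by rw [Real.rpow_natCast]
  have hfine : R / 2 ^ k ≤ r := by
    rw [div_le_iff₀ hr] at h2k
    rw [div_le_iff₀ (by positivity : (0:ℝ) < 2 ^ k)]
    linarith
  obtain ⟨t, ht, hcard⟩ := hcov k x R hR
  have h1 : coveringNumber r (closedBall x R) ≤ (t.card : ℕ∞) :=
    coveringNumber_le_card'
      (ht.trans (iUnion₂_mono fun y _ => closedBall_subset_closedBall hfine))
  have hreal : (M : ℝ) ^ k ≤ (M : ℝ) * (R / r) ^ Real.logb 2 (M : ℝ) := by
    have hk1 : (k : ℝ) ≤ Real.logb 2 (R / r) + 1 := (Nat.ceil_lt_add_one hlogb0).le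
    have hswap : (M : ℝ) ^ Real.logb 2 (R / r) = (R / r) ^ Real.logb 2 (M : ℝ) := by
      rw [Real.rpow_def_of_pos hMpos, Real.rpow_def_of_pos hqpos, Real.logb, Real.logb]
      congr 1
      ring
    calc (M : ℝ) ^ k = (M : ℝ) ^ (k : ℝ) := (Real.rpow_natCast _ _).symm
      _ ≤ (M : ℝ) ^ (Real.logb 2 (R / r) + 1) :=
          Real.rpow_le_rpow_of_exponent_le hM1' hk1
      _ = (M : ℝ) ^ Real.logb 2 (R / r) * (M : ℝ) := by
          rw [Real.rpow_add hMpos, Real.rpow_one]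
      _ = (M : ℝ) * (R / r) ^ Real.logb 2 (M : ℝ) := by rw [hswap]; ring
  calc (coveringNumber r (closedBall x R) : ℝ≥0∞) ≤ ((t.card : ℕ∞) : ℝ≥0∞) :=
        ENat.toENNReal_mono h1
    _ = ((t.card : ℕ) : ℝ≥0∞) := ENat.toENNReal_coe _
    _ ≤ ((M ^ k : ℕ) : ℝ≥0∞) := by exact_mod_cast hcard
    _ = ENNReal.ofReal ((M : ℝ) ^ k) := by
        rw [← ENNReal.ofReal_natCast]
        push_cast
        ring_nf
    _ ≤ ENNReal.ofReal ((M : ℝ) * (R / r) ^ Real.logb 2 (M : ℝ)) :=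
        ENNReal.ofReal_le_ofReal hreal

private lemma coveringNumber_mono_set' {r : ℝ} {E E' : Set X} (h : E ⊆ E') :
    coveringNumber r E ≤ coveringNumber r E' :=
  sInf_le_sInf (by rintro n ⟨t, ht, rfl⟩; exact ⟨t, h.trans ht, rfl⟩)

private def specSet (θ : ℝ) (F : Set X) : Set ℝ :=
  {s : ℝ | 0 ≤ s ∧ ∃ C > (0 : ℝ), ∀ R : ℝ, 0 < R → R < 1 → ∀ x ∈ F,
    (coveringNumber (R ^ (1 / θ)) (closedBall x R ∩ F) : ℝ≥0∞)
      ≤ ENNReal.ofReal (C * (R / R ^ (1 / θ)) ^ s)}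

private lemma assouadSpectrum_eq_sInf (θ : ℝ) (F : Set X) :
    assouadSpectrum θ F = sInf (specSet θ F) := rfl

private lemma assouad_transfer {θ θ' s : ℝ} {F : Set X} (h0 : 0 < θ) (hle : θ ≤ θ')
    (h1 : θ' < 1) (hs : s ∈ specSet θ F) :
    s * ((1 - θ) / (1 - θ')) ∈ specSet θ' F := by
  obtain ⟨hs0, C, hC, hbound⟩ := hs
  have hθ'0 : 0 < θ' := h0.trans_le hle
  have h1θ' : (0 : ℝ) < 1 - θ' := by linarith
  refine ⟨mul_nonneg hs0 (div_nonneg (by linarith) h1θ'.le), C, hC, ?_⟩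
  intro R hR0 hR1 x hx
  set R' := R ^ (θ / θ') with hR'def
  have hR'0 : 0 < R' := Real.rpow_pos_of_pos hR0 _
  have hR'1 : R' < 1 := Real.rpow_lt_one hR0.le hR1 (by positivity)
  have hRle : R ≤ R' := by
    calc R = R ^ (1 : ℝ) := (Real.rpow_one R).symm
      _ ≤ R ^ (θ / θ') := Real.rpow_le_rpow_of_exponent_ge hR0 hR1.le
          ((div_le_one hθ'0).2 hle)
  have hexp : R' ^ (1 / θ) = R ^ (1 / θ') := by
    rw [hR'def, ← Real.rpow_mul hR0.le]
    congr 1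
    field_simp
  have key := hbound R' hR'0 hR'1 x hx
  rw [hexp] at key
  refine le_trans (le_trans (ENat.toENNReal_mono (coveringNumber_mono_set'
    (inter_subset_inter_left F (closedBall_subset_closedBall hRle)))) key) (le_of_eq ?_)
  congr 1
  have hθ : θ ≠ 0 := h0.ne'
  have hθ' : θ' ≠ 0 := hθ'0.ne'
  have h1θ'ne : (1 : ℝ) - θ' ≠ 0 := h1θ'.ne'
  have eL : (R' / R ^ (1 / θ')) ^ s = R ^ ((θ / θ') * ((1 - 1 / θ) * s)) := by
    rw [← hexp]
    have e1 : R' / R' ^ (1 / θ) = R' ^ ((1 : ℝ) - 1 / θ) := by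
      rw [Real.rpow_sub hR'0, Real.rpow_one]
    rw [e1, ← Real.rpow_mul hR'0.le, hR'def, ← Real.rpow_mul hR0.le]
  have eR : (R / R ^ (1 / θ')) ^ (s * ((1 - θ) / (1 - θ'))) =
      R ^ ((1 - 1 / θ') * (s * ((1 - θ) / (1 - θ')))) := by
    have e2 : R / R ^ (1 / θ') = R ^ ((1 : ℝ) - 1 / θ') := by
      rw [Real.rpow_sub hR0, Real.rpow_one]
    rw [e2, ← Real.rpow_mul hR0.le]
  rw [eL, eR]
  have hee : (θ / θ') * ((1 - 1 / θ) * s) = (1 - 1 / θ') * (s * ((1 - θ) / (1 - θ'))) := by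
    field_simp
    ring
  rw [hee]

/-- For every `F ⊆ ℝ^d`, `lim_{θ→0⁺} dim_A^θ F` exists and equals
`\overline{dim}_{GB} F = limsup_{θ→0⁺} dim_A^θ F`. -/
theorem assouadSpectrum_tendsto_genUpperBoxDim
    (d : ℕ) (F : Set (EuclideanSpace ℝ (Fin d))) :
    Tendsto (fun θ : ℝ => assouadSpectrum θ F) (𝓝[>] (0 : ℝ)) (𝓝 (genUpperBoxDim F)) := by
  classical
  obtain ⟨C₀, hC₀, s₀, hs₀, hcovN⟩ := euclidean_covN d
  set f := fun θ : ℝ => assouadSpectrum θ F with hfdef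
  have hbddA : ∀ θ : ℝ, BddBelow (specSet θ F) := fun θ => ⟨0, fun s hs => hs.1⟩
  have hmemA : ∀ θ : ℝ, 0 < θ → θ < 1 → s₀ ∈ specSet θ F := by
    intro θ hθ0 hθ1
    refine ⟨hs₀, C₀, hC₀, ?_⟩
    intro R hR0 hR1 x hx
    have hr0 : 0 < R ^ (1 / θ) := Real.rpow_pos_of_pos hR0 _
    have hrR : R ^ (1 / θ) ≤ R := by
      calc R ^ (1 / θ) ≤ R ^ (1 : ℝ) :=
            Real.rpow_le_rpow_of_exponent_ge hR0 hR1.le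
              (by rw [le_div_iff₀ hθ0]; linarith)
        _ = R := Real.rpow_one R
    exact le_trans (ENat.toENNReal_mono (coveringNumber_mono_set' inter_subset_left))
      (hcovN x _ R hr0 hrR)
  have hf_nonneg : ∀ θ : ℝ, 0 ≤ f θ := fun θ =>
    Real.sInf_nonneg fun s hs => hs.1
  have hf_le : ∀ θ : ℝ, 0 < θ → θ < 1 → f θ ≤ s₀ := fun θ h0 h1 =>
    csInf_le (hbddA θ) (hmemA θ h0 h1)
  have hineq : ∀ θ θ' : ℝ, 0 < θ → θ ≤ θ' → θ' < 1 →
      f θ' ≤ (1 - θ) / (1 - θ') * f θ := by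
    intro θ θ' h0 hle h1
    have hθ1 : θ < 1 := lt_of_le_of_lt hle h1
    have hc : 0 < (1 - θ) / (1 - θ') := by
      have h1θ' : (0 : ℝ) < 1 - θ' := by linarith
      have h1θ : (0 : ℝ) < 1 - θ := by linarith
      positivity
    have h2 : ∀ s ∈ specSet θ F, f θ' ≤ (1 - θ) / (1 - θ') * s := by
      intro s hsA
      have hmem := assouad_transfer h0 hle h1 hsA
      calc f θ' ≤ s * ((1 - θ) / (1 - θ')) := csInf_le (hbddA θ') hmem
        _ = (1 - θ) / (1 - θ') * s := mul_comm _ _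
    have hne : (specSet θ F).Nonempty := ⟨s₀, hmemA θ h0 hθ1⟩
    have h3 : f θ' / ((1 - θ) / (1 - θ')) ≤ sInf (specSet θ F) := by
      refine le_csInf hne fun s hsA => ?_
      rw [div_le_iff₀ hc]
      calc f θ' ≤ (1 - θ) / (1 - θ') * s := h2 s hsA
        _ = s * ((1 - θ) / (1 - θ')) := mul_comm _ _
    rw [div_le_iff₀ hc] at h3
    calc f θ' ≤ sInf (specSet θ F) * ((1 - θ) / (1 - θ')) := h3
      _ = (1 - θ) / (1 - θ') * f θ := mul_comm _ _
  -- limit machinery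
  set l := Filter.liminf f (𝓝[>] (0 : ℝ)) with hldef
  have hIoo : Ioo (0 : ℝ) 1 ∈ 𝓝[>] (0 : ℝ) :=
    Ioo_mem_nhdsGT_of_mem ⟨le_refl 0, one_pos⟩
  have hbddAbove : IsBoundedUnder (· ≤ ·) (𝓝[>] (0 : ℝ)) f :=
    ⟨s₀, eventually_map.2 (eventually_of_mem hIoo fun θ hθ => hf_le θ hθ.1 hθ.2)⟩
  have hbddBelow : IsBoundedUnder (· ≥ ·) (𝓝[>] (0 : ℝ)) f :=
    ⟨0, eventually_map.2 (Filter.Eventually.of_forall fun θ => hf_nonneg θ)⟩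
  have hcoB : IsCoboundedUnder (· ≥ ·) (𝓝[>] (0 : ℝ)) f := hbddAbove.isCoboundedUnder_ge
  have hcoA : IsCoboundedUnder (· ≤ ·) (𝓝[>] (0 : ℝ)) f := hbddBelow.isCoboundedUnder_le
  have hstep : ∀ θ' ∈ Ioo (0 : ℝ) 1, (1 - θ') * f θ' ≤ l := by
    intro θ' hθ'
    have h1θ' : (0 : ℝ) < 1 - θ' := by linarith [hθ'.2]
    apply Filter.le_liminf_of_le hcoB
    filter_upwards [Ioo_mem_nhdsGT_of_mem (⟨le_refl 0, hθ'.1⟩ : (0 : ℝ) ∈ Ico 0 θ')]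
      with θ hθ
    have h := hineq θ θ' hθ.1 hθ.2.le hθ'.2
    rw [div_mul_eq_mul_div, le_div_iff₀ h1θ'] at h
    have h4 : (1 - θ) * f θ ≤ f θ := mul_le_of_le_one_left (hf_nonneg θ) (by linarith [hθ.1])
    calc (1 - θ') * f θ' = f θ' * (1 - θ') := mul_comm _ _
      _ ≤ (1 - θ) * f θ := h
      _ ≤ f θ := h4
  have hLl : Filter.limsup f (𝓝[>] (0 : ℝ)) ≤ l := by
    apply _root_.le_of_forall_pos_le_add
    intro ε hε
    apply Filter.limsup_le_of_le hcoA
    set δ := min 1 (ε / (s₀ + 1)) with hδdef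
    have hδ0 : 0 < δ := lt_min one_pos (by positivity)
    filter_upwards [Ioo_mem_nhdsGT_of_mem (⟨le_refl 0, hδ0⟩ : (0 : ℝ) ∈ Ico 0 δ)]
      with θ' hθ'
    have hθ'1 : θ' < 1 := lt_of_lt_of_le hθ'.2 (min_le_left _ _)
    have h := hstep θ' ⟨hθ'.1, hθ'1⟩
    have h2 : θ' * f θ' ≤ θ' * s₀ :=
      mul_le_mul_of_nonneg_left (hf_le θ' hθ'.1 hθ'1) hθ'.1.le
    have h3 : θ' * s₀ ≤ ε := by
      have hθ'δ : θ' ≤ ε / (s₀ + 1) := le_trans hθ'.2.le (min_le_right _ _)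
      calc θ' * s₀ ≤ θ' * (s₀ + 1) :=
            mul_le_mul_of_nonneg_left (by linarith) hθ'.1.le
        _ ≤ ε / (s₀ + 1) * (s₀ + 1) :=
            mul_le_mul_of_nonneg_right hθ'δ (by linarith)
        _ = ε := div_mul_cancel₀ ε (by positivity)
    linarith
  have hfinal : genUpperBoxDim F = Filter.limsup f (𝓝[>] (0 : ℝ)) := rfl
  apply tendsto_of_le_liminf_of_limsup_le
  · rw [hfinal]; exact hLl
  · rw [hfinal]
  · exact hbddAbove
  · exact hbddBelow

end
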